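/- Let d > m ≥ 1 be integers, t, c ∈ ℂ \ {0}, Q(z) = t·z^d + c·z^m, and θ ∈ ℝ. Then θ is a good ray for Q if and only if there exist integers k and l such that (Arg t + (d+2)θ − 2πk, Arg c + (m+2)θ − 2πl) ∈ H, where Arg denotes the principal argument with values in (−π, π] and H = {(x,y) ∈ ℝ² : |x| < π, |y| < π, |y − x| < π}. -/

import Mathlib

/-!
Put `A = t e^{i(d+2)θ}` and `B = c e^{i(m+2)θ}`. On the ray `z = r e^{iθ}` one has
`z² Q(z) = r^{m+2} (r^{d-m} A + B)`, and `r^{d-m}` runs through all positive reals, so `θ` is good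
iff `A`, `B` and every `s A + B` with `s > 0` avoid `(-∞, 0]`. For `A`, `B` off `(-∞, 0]` this
happens iff `|arg B - arg A| < π`: then `1`, `A`, `B` lie in a common open half-plane, and otherwise
the positive `s` that makes `s A + B` real makes it nonpositive. Since `arg A ≡ arg t + (d+2)θ` and
`arg B ≡ arg c + (m+2)θ` modulo `2π`, the hexagon condition for some `k, l` says exactly that
`arg A`, `arg B` lie in `(-π, π)` at distance less than `π`.
-/

open Complex

/-- The direction `θ` (i.e. the ray `L(θ) = {r e^{iθ} : r > 0}`) is a *good ray* for the
binomial `Q(z) = t z^d + c z^m`: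
(i) `L(θ)` is not a Stokes line of `t z^d dz²`;
(ii) `L(θ)` is not a Stokes line of `c z^m dz²`;
(iii) `L(θ)` contains no turning point of `Q`;
(iv) `L(θ)` is not tangent to any vertical trajectory of `Q(z)dz²`. -/
def GoodRay (d m : ℕ) (t c : ℂ) (θ : ℝ) : Prop :=
  (¬ ∃ x : ℝ, x < 0 ∧ t * Complex.exp ((((d : ℝ) + 2) * θ : ℂ) * Complex.I) = (x : ℂ)) ∧
  (¬ ∃ x : ℝ, x < 0 ∧ c * Complex.exp ((((m : ℝ) + 2) * θ : ℂ) * Complex.I) = (x : ℂ)) ∧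
  (∀ r : ℝ, 0 < r →
    t * ((r : ℂ) * Complex.exp ((θ : ℂ) * Complex.I)) ^ d +
      c * ((r : ℂ) * Complex.exp ((θ : ℂ) * Complex.I)) ^ m ≠ 0) ∧
  (∀ r : ℝ, 0 < r → ¬ ∃ x : ℝ, x ≤ 0 ∧
    ((r : ℂ) * Complex.exp ((θ : ℂ) * Complex.I)) ^ 2 *
      (t * ((r : ℂ) * Complex.exp ((θ : ℂ) * Complex.I)) ^ d +
       c * ((r : ℂ) * Complex.exp ((θ : ℂ) * Complex.I)) ^ m) = (x : ℂ))

open scoped Real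

lemma exists_abs_sub_lt_half_of_abs_sub_lt {a b c r : ℝ} (hab : |a - b| < r)
    (hbc : |b - c| < r) (hac : |a - c| < r) :
    ∃ φ, |a - φ| < r / 2 ∧ |b - φ| < r / 2 ∧ |c - φ| < r / 2 := by
  refine ⟨(max (max a b) c + min (min a b) c) / 2, ?_, ?_, ?_⟩ <;>
  · rw [abs_lt] at *
    constructor <;>
    · rcases max_cases (max a b) c with h₁ | h₁ <;> rcases max_cases a b with h₂ | h₂ <;>
      rcases min_cases (min a b) c with h₃ | h₃ <;> rcases min_cases a b with h₄ | h₄ <;>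
      linarith

lemma forall_pos_pow_iff {n : ℕ} (hn : n ≠ 0) {P : ℝ → Prop} :
    (∀ r : ℝ, 0 < r → P (r ^ n)) ↔ ∀ s : ℝ, 0 < s → P s := by
  refine ⟨fun h s hs => ?_, fun h r hr => h _ (pow_pos hr n)⟩
  simpa [Real.rpow_inv_natCast_pow hs.le hn] using h (s ^ (n⁻¹ : ℝ)) (by positivity)

namespace Complex

lemma norm_mul_cos_arg_sub (z : ℂ) (φ : ℝ) :
    ‖z‖ * Real.cos (arg z - φ) = z.re * Real.cos φ + z.im * Real.sin φ := by
  rw [Real.cos_sub, ← norm_mul_cos_arg, ← norm_mul_sin_arg]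
  ring

lemma ofReal_mul_mem_slitPlane_iff {s : ℝ} (hs : 0 < s) {z : ℂ} :
    (s : ℂ) * z ∈ slitPlane ↔ z ∈ slitPlane := by
  simp [mem_slitPlane_iff, hs.ne', mul_pos_iff_of_pos_left hs]

lemma mem_slitPlane_iff_abs_arg_lt_pi {z : ℂ} (hz : z ≠ 0) :
    z ∈ slitPlane ↔ |arg z| < π := by
  rw [mem_slitPlane_iff_arg, abs_lt, ← (arg_le_pi z).lt_iff_ne]
  simp [hz, neg_pi_lt_arg z]

lemma exists_nonpos_eq_iff_notMem_slitPlane {z : ℂ} :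
    (∃ x : ℝ, x ≤ 0 ∧ z = x) ↔ z ∉ slitPlane := by
  rw [mem_slitPlane_iff_not_le_zero, not_not, le_def]
  constructor
  · rintro ⟨x, hx, rfl⟩
    simpa using hx
  · rintro ⟨hre, him⟩
    exact ⟨z.re, hre, ext rfl (by simpa using him)⟩

lemma exists_neg_eq_iff_notMem_slitPlane {z : ℂ} (hz : z ≠ 0) :
    (∃ x : ℝ, x < 0 ∧ z = x) ↔ z ∉ slitPlane := by
  rw [← exists_nonpos_eq_iff_notMem_slitPlane]
  refine exists_congr fun x => and_congr_left fun hzx => ?_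
  rw [lt_iff_le_and_ne, and_iff_left_iff_imp]
  rintro - rfl
  exact hz (by simpa using hzx)

/-- `1`, `A` and `B` lie in a common open half-plane `{z | 0 < z.re * cos φ + z.im * sin φ}`,
which is closed under positive combinations and misses `(-∞, 0]`. -/
lemma ofReal_mul_add_mem_slitPlane {A B : ℂ} (hA : A ∈ slitPlane) (hB : B ∈ slitPlane)
    (hAB : |arg B - arg A| < π) {s : ℝ} (hs : 0 < s) : (s : ℂ) * A + B ∈ slitPlane := by
  have hA₀ := slitPlane_ne_zero hA
  have hB₀ := slitPlane_ne_zero hB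
  obtain ⟨φ, hAφ, hBφ, hφ⟩ := exists_abs_sub_lt_half_of_abs_sub_lt (c := 0)
    (by rwa [abs_sub_comm]) (by simpa [← mem_slitPlane_iff_abs_arg_lt_pi hB₀] using hB)
    (by simpa [← mem_slitPlane_iff_abs_arg_lt_pi hA₀] using hA)
  have hpos : ∀ z : ℂ, z ≠ 0 → |arg z - φ| < π / 2 →
      0 < z.re * Real.cos φ + z.im * Real.sin φ := fun z hz h =>
    norm_mul_cos_arg_sub z φ ▸ mul_pos (norm_pos_iff.2 hz) (Real.cos_pos_of_mem_Ioo (abs_lt.1 h))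
  have hcos : 0 < Real.cos φ := Real.cos_pos_of_mem_Ioo (abs_lt.1 (by simpa using hφ))
  have hA' := hpos A hA₀ hAφ
  have hB' := hpos B hB₀ hBφ
  rw [mem_slitPlane_iff, ← not_le, ← not_and_or]
  rintro ⟨hre, him⟩
  simp only [add_re, add_im, re_ofReal_mul, im_ofReal_mul] at hre him
  have hℓ : (s * A.re + B.re) * Real.cos φ + (s * A.im + B.im) * Real.sin φ =
      s * (A.re * Real.cos φ + A.im * Real.sin φ) + (B.re * Real.cos φ + B.im * Real.sin φ) := by
    ring
  rw [him, zero_mul, add_zero] at hℓ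
  linarith [mul_nonpos_of_nonpos_of_nonneg hre hcos.le, mul_pos hs hA']

/-- With `s = -B.im / A.im > 0` the sum is real, with the sign of `sin (arg A - arg B) ≤ 0`. -/
lemma exists_ofReal_mul_add_notMem_slitPlane {A B : ℂ} (hA : A ∈ slitPlane) (hB : B ≠ 0)
    (hAB : arg B + π ≤ arg A) : ∃ s : ℝ, 0 < s ∧ (s : ℂ) * A + B ∉ slitPlane := by
  have hA₀ := slitPlane_ne_zero hA
  have ha : arg A < π := (arg_le_pi A).lt_of_ne (slitPlane_arg_ne_pi hA)
  have hb := neg_pi_lt_arg B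
  have hAim : 0 < A.im := by
    rw [← norm_mul_sin_arg]
    exact mul_pos (norm_pos_iff.2 hA₀) (Real.sin_pos_of_pos_of_lt_pi (by linarith) ha)
  have hBim : B.im < 0 := arg_neg_iff.1 (by linarith)
  have hsin : Real.sin (arg A - arg B) ≤ 0 := by
    rw [← neg_nonneg, ← Real.sin_sub_pi]
    exact Real.sin_nonneg_of_nonneg_of_le_pi (by linarith) (by linarith)
  have hcross : A.im * B.re - A.re * B.im = ‖A‖ * ‖B‖ * Real.sin (arg A - arg B) := by
    rw [Real.sin_sub, ← norm_mul_cos_arg A, ← norm_mul_cos_arg B, ← norm_mul_sin_arg A,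
      ← norm_mul_sin_arg B]
    ring
  refine ⟨-B.im / A.im, div_pos (neg_pos.2 hBim) hAim, ?_⟩
  rw [mem_slitPlane_iff, not_or, not_lt, not_ne_iff]
  simp only [add_re, add_im, re_ofReal_mul, im_ofReal_mul]
  constructor
  · have hre : -B.im / A.im * A.re + B.re = (A.im * B.re - A.re * B.im) / A.im := by
      field_simp
      ring
    rw [hre, hcross]
    exact div_nonpos_of_nonpos_of_nonneg (mul_nonpos_of_nonneg_of_nonpos (by positivity) hsin)
      hAim.le
  · field_simp
    ring

theorem forall_ofReal_mul_add_mem_slitPlane_iff {A B : ℂ} (hA : A ∈ slitPlane)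
    (hB : B ∈ slitPlane) :
    (∀ s : ℝ, 0 < s → (s : ℂ) * A + B ∈ slitPlane) ↔ |arg B - arg A| < π := by
  refine ⟨fun h => ?_, fun hAB s hs => ofReal_mul_add_mem_slitPlane hA hB hAB hs⟩
  by_contra hAB
  rcases le_abs'.1 (not_lt.1 hAB) with hAB | hAB
  · obtain ⟨s, hs, hsAB⟩ := exists_ofReal_mul_add_notMem_slitPlane hA (slitPlane_ne_zero hB)
      (by linarith)
    exact hsAB (h s hs)
  · obtain ⟨s, hs, hsBA⟩ := exists_ofReal_mul_add_notMem_slitPlane hB (slitPlane_ne_zero hA)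
      (by linarith)
    have hBA : (s : ℂ) * B + A = (s : ℂ) * ((s⁻¹ : ℝ) * A + B) := by
      rw [mul_add, ← mul_assoc, ← ofReal_mul, mul_inv_cancel₀ hs.ne', ofReal_one, one_mul,
        add_comm]
    exact hsBA (hBA ▸ (ofReal_mul_mem_slitPlane_iff hs).2 (h s⁻¹ (inv_pos.2 hs)))

end Complex

namespace Real.Angle

lemma sub_two_pi_mul_eq_toReal {α : ℝ} {k : ℤ} (h : |α - 2 * π * k| < π) :
    α - 2 * π * k = (α : Angle).toReal := by
  have hcoe : ((α - 2 * π * k : ℝ) : Angle) = α :=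
    angle_eq_iff_two_pi_dvd_sub.2 ⟨-k, by push_cast; ring⟩
  rw [← hcoe, toReal_coe_eq_self_iff.2 ⟨(abs_lt.1 h).1, (abs_lt.1 h).2.le⟩]

lemma exists_sub_two_pi_mul_eq_toReal (α : ℝ) :
    ∃ k : ℤ, α - 2 * π * k = (α : Angle).toReal := by
  obtain ⟨k, hk⟩ := angle_eq_iff_two_pi_dvd_sub.1 (coe_toReal (α : Angle)).symm
  exact ⟨k, by linarith⟩

end Real.Angle

theorem exists_int_hexagon_iff (α β : ℝ) :
    (∃ k l : ℤ, |α - 2 * π * k| < π ∧ |β - 2 * π * l| < π ∧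
        |(β - 2 * π * l) - (α - 2 * π * k)| < π) ↔
      |(α : Real.Angle).toReal| < π ∧ |(β : Real.Angle).toReal| < π ∧
        |(β : Real.Angle).toReal - (α : Real.Angle).toReal| < π := by
  constructor
  · rintro ⟨k, l, hk, hl, hkl⟩
    rw [Real.Angle.sub_two_pi_mul_eq_toReal hk, Real.Angle.sub_two_pi_mul_eq_toReal hl] at *
    exact ⟨hk, hl, hkl⟩
  · intro h
    obtain ⟨k, hk⟩ := Real.Angle.exists_sub_two_pi_mul_eq_toReal α
    obtain ⟨l, hl⟩ := Real.Angle.exists_sub_two_pi_mul_eq_toReal β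
    exact ⟨k, l, hk ▸ hl ▸ h⟩

/-- Along `z = r e^{iθ}` the quadratic differential `a z^n dz²` is `r^n · rayCoeff n a θ · dr²`. -/
noncomputable def rayCoeff (n : ℕ) (a : ℂ) (θ : ℝ) : ℂ :=
  a * Complex.exp ((((n : ℝ) + 2) * θ : ℂ) * Complex.I)

lemma rayCoeff_ne_zero {n : ℕ} {a : ℂ} (ha : a ≠ 0) (θ : ℝ) : rayCoeff n a θ ≠ 0 :=
  mul_ne_zero ha (exp_ne_zero _)

lemma rayCoeff_eq_mul_exp_pow (n : ℕ) (a : ℂ) (θ : ℝ) :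
    rayCoeff n a θ = a * exp (θ * I) ^ (n + 2) := by
  rw [rayCoeff, ← exp_nat_mul]
  push_cast
  ring_nf

lemma arg_rayCoeff {n : ℕ} {a : ℂ} (ha : a ≠ 0) (θ : ℝ) :
    arg (rayCoeff n a θ) = ((arg a + (n + 2) * θ : ℝ) : Real.Angle).toReal := by
  have hψ : (((n : ℝ) + 2) * θ : ℂ) = (((n + 2) * θ : ℝ) : ℂ) := by push_cast; rfl
  rw [← arg_coe_angle_toReal_eq_arg, rayCoeff, arg_mul_coe_angle ha (exp_ne_zero _), hψ,
    arg_exp_mul_I, Real.Angle.coe_toIocMod, Real.Angle.coe_add]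

lemma sq_mul_binomial_ray {d m : ℕ} (hmd : m ≤ d) (t c : ℂ) (θ r : ℝ) :
    ((r : ℂ) * exp (θ * I)) ^ 2 *
        (t * ((r : ℂ) * exp (θ * I)) ^ d + c * ((r : ℂ) * exp (θ * I)) ^ m) =
      (r : ℂ) ^ (m + 2) * ((r : ℂ) ^ (d - m) * rayCoeff d t θ + rayCoeff m c θ) := by
  obtain ⟨k, rfl⟩ := Nat.exists_eq_add_of_le hmd
  rw [rayCoeff_eq_mul_exp_pow, rayCoeff_eq_mul_exp_pow, Nat.add_sub_cancel_left]
  ring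

theorem goodRay_iff_mem_slitPlane {d m : ℕ} (hmd : m < d) {t c : ℂ} (ht : t ≠ 0) (hc : c ≠ 0)
    (θ : ℝ) :
    GoodRay d m t c θ ↔ rayCoeff d t θ ∈ slitPlane ∧ rayCoeff m c θ ∈ slitPlane ∧
      ∀ s : ℝ, 0 < s → (s : ℂ) * rayCoeff d t θ + rayCoeff m c θ ∈ slitPlane := by
  have hray : ∀ r : ℝ, 0 < r → ((¬∃ x : ℝ, x ≤ 0 ∧
      ((r : ℂ) * exp (θ * I)) ^ 2 *
        (t * ((r : ℂ) * exp (θ * I)) ^ d + c * ((r : ℂ) * exp (θ * I)) ^ m) = x) ↔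
      ((r ^ (d - m) : ℝ) : ℂ) * rayCoeff d t θ + rayCoeff m c θ ∈ slitPlane) := fun r hr => by
    rw [exists_nonpos_eq_iff_notMem_slitPlane, not_not, sq_mul_binomial_ray hmd.le, ← ofReal_pow,
      ofReal_mul_mem_slitPlane_iff (pow_pos hr _), ofReal_pow]
  change (¬∃ x : ℝ, x < 0 ∧ rayCoeff d t θ = x) ∧ (¬∃ x : ℝ, x < 0 ∧ rayCoeff m c θ = x) ∧ _ ↔ _
  rw [exists_neg_eq_iff_notMem_slitPlane (rayCoeff_ne_zero ht θ),
    exists_neg_eq_iff_notMem_slitPlane (rayCoeff_ne_zero hc θ), not_not, not_not,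
    forall₂_congr hray]
  refine and_congr_right' (and_congr_right' ?_)
  -- a zero of `Q` on the ray would make `z² Q(z) = 0` a nonpositive real
  refine (and_iff_right_of_imp fun h r hr hQ => (hray r hr).2 (h r hr) ⟨0, le_rfl, ?_⟩).trans
    (forall_pos_pow_iff (Nat.sub_ne_zero_of_lt hmd)
      (P := fun s => (s : ℂ) * rayCoeff d t θ + rayCoeff m c θ ∈ slitPlane))
  rw [hQ, mul_zero, ofReal_zero]

theorem ray_good_iff_translated_hexagon_general
    (d m : ℕ) (hdm : m < d)
    (t c : ℂ) (ht : t ≠ 0) (hc : c ≠ 0) (θ : ℝ) :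
    GoodRay d m t c θ ↔
      ∃ k l : ℤ,
        |Complex.arg t + ((d : ℝ) + 2) * θ - 2 * Real.pi * (k : ℝ)| < Real.pi ∧
        |Complex.arg c + ((m : ℝ) + 2) * θ - 2 * Real.pi * (l : ℝ)| < Real.pi ∧
        |(Complex.arg c + ((m : ℝ) + 2) * θ - 2 * Real.pi * (l : ℝ)) -
          (Complex.arg t + ((d : ℝ) + 2) * θ - 2 * Real.pi * (k : ℝ))| < Real.pi := by
  rw [goodRay_iff_mem_slitPlane hdm ht hc, exists_int_hexagon_iff, ← arg_rayCoeff ht,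
    ← arg_rayCoeff hc, ← mem_slitPlane_iff_abs_arg_lt_pi (rayCoeff_ne_zero ht θ),
    ← mem_slitPlane_iff_abs_arg_lt_pi (rayCoeff_ne_zero hc θ)]
  exact and_congr_right fun hA => and_congr_right fun hB =>
    forall_ofReal_mul_add_mem_slitPlane_iff hA hB

/-- The ray `L(θ)` is a good ray for `Q = t z^d + c z^m` if and only if
`(Arg t, Arg c)` belongs to the hexagon `H` translated by
`(2πk − (d+2)θ, 2πl − (m+2)θ)` for some integers `k, l`. -/
theorem ray_good_iff_translated_hexagon
    (d m : ℕ) (hm : 1 ≤ m) (hdm : m < d)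
    (t c : ℂ) (ht : t ≠ 0) (hc : c ≠ 0) (θ : ℝ) :
    GoodRay d m t c θ ↔
      ∃ k l : ℤ,
        |Complex.arg t + ((d : ℝ) + 2) * θ - 2 * Real.pi * (k : ℝ)| < Real.pi ∧
        |Complex.arg c + ((m : ℝ) + 2) * θ - 2 * Real.pi * (l : ℝ)| < Real.pi ∧
        |(Complex.arg c + ((m : ℝ) + 2) * θ - 2 * Real.pi * (l : ℝ)) -
          (Complex.arg t + ((d : ℝ) + 2) * θ - 2 * Real.pi * (k : ℝ))| < Real.pi :=
  ray_good_iff_translated_hexagon_general d m hdm t c ht hc θ
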